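/- arXiv:1903.11582 — 4 statements merged into one kernel-verified Lean document; each statement's English description precedes it below -/
import Mathlib

section
/- Let y₁, y₂ ∈ ℝᵖ and let λ₁, λ₂ ∈ ℝᵖ each have nonnegative nondecreasing entries. Then ‖Prox_{λ₁}(y₁) − Prox_{λ₂}(y₂)‖ ≤ 2(‖λ₁ − λ₂‖ + ‖y₁ − y₂‖), where ‖·‖ is the Euclidean norm on ℝᵖ. -/
/-!
Let `x₁ = Prox_{λ₁}(y₁)`, `x₂ = Prox_{λ₂}(y₂)` and `D = ‖x₁ - x₂‖²`. The sorted ℓ1 norm is convex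
(it is the largest of the pairings `∑ λ_i |x_{σ i}|` over permutations `σ`, by the rearrangement
inequality), so the SLOPE objective is 1-strongly convex and comparing it at a minimizer with its
value at a midpoint gives `F(x₁) + D/4 ≤ F(x₂)`. Adding this to the symmetric inequality for the
second objective, the quadratic and the `J` terms collapse to
`D/2 ≤ ⟨y₁ - y₂, x₁ - x₂⟩ + ⟨λ₁ - λ₂, |x₂|_↑ - |x₁|_↑⟩`, where `|x|_↑` is the sorted vector of
absolute values. Sorting absolute values is 1-Lipschitz for the Euclidean norm (rearrangement
inequality again), so Cauchy–Schwarz bounds the right side by `(‖λ₁ - λ₂‖ + ‖y₁ - y₂‖) √D`.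
-/

open MeasureTheory Filter Finset Topology

/-- The nondecreasing rearrangement of the absolute values of the entries of `x`. -/
noncomputable def sortedAbs {p : ℕ} (x : Fin p → ℝ) : Fin p → ℝ :=
  fun i => |x (Tuple.sort (fun j => |x j|) i)|

/-- The sorted ℓ1 norm `J_λ(x) = ∑ λ_i |x|_(i)`. -/
noncomputable def sortedL1 {p : ℕ} (lam x : Fin p → ℝ) : ℝ :=
  ∑ i, lam i * sortedAbs x i

/-- The SLOPE objective `(1/2)‖y - x‖² + J_λ(x)`. -/
noncomputable def slopeObj {p : ℕ} (lam y x : Fin p → ℝ) : ℝ :=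
  (1 / 2) * ∑ i, (y i - x i) ^ 2 + sortedL1 lam x

open Classical in
/-- The SLOPE proximal operator: the (unique) minimizer of the SLOPE objective. -/
noncomputable def slopeProx {p : ℕ} (lam y : Fin p → ℝ) : Fin p → ℝ :=
  if h : ∃ x : Fin p → ℝ, ∀ z : Fin p → ℝ, slopeObj lam y x ≤ slopeObj lam y z
  then h.choose else y

lemma sq_dist_le_sum_sq_sub {ι : Type*} [Fintype ι] (x y : ι → ℝ) :
    dist x y ^ 2 ≤ ∑ i, (x i - y i) ^ 2 := by
  refine (Real.le_sqrt dist_nonneg (sum_nonneg fun i _ => sq_nonneg _)).1 <|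
    (dist_pi_le_iff (Real.sqrt_nonneg _)).2 fun i => ?_
  rw [Real.dist_eq, ← Real.sqrt_sq_eq_abs]
  exact Real.sqrt_le_sqrt <|
    single_le_sum (f := fun j => (x j - y j) ^ 2) (fun j _ => sq_nonneg _) (mem_univ i)

lemma Real.sqrt_le_of_le_mul_sqrt {a c : ℝ} (hc : 0 ≤ c) (h : a ≤ c * √a) : √a ≤ c := by
  rcases le_or_gt a 0 with ha | ha
  · rw [Real.sqrt_eq_zero'.2 ha]; exact hc
  · have hsa := Real.sqrt_pos.2 ha
    exact le_of_mul_le_mul_right ((Real.mul_self_sqrt ha.le).trans_le h) hsa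

section SortedL1

variable {p : ℕ}

lemma sortedAbs_monotone (x : Fin p → ℝ) : Monotone (sortedAbs x) :=
  Tuple.monotone_sort (fun j => |x j|)

lemma sortedAbs_sort_symm (x : Fin p → ℝ) (j : Fin p) :
    sortedAbs x ((Tuple.sort fun j => |x j|).symm j) = |x j| := by
  simp [sortedAbs]

lemma sum_sortedAbs_sq (x : Fin p → ℝ) : ∑ i, sortedAbs x i ^ 2 = ∑ i, x i ^ 2 := by
  simpa [sortedAbs, sq_abs] using Equiv.sum_comp (Tuple.sort fun j => |x j|) (fun j => x j ^ 2)

lemma sum_abs_mul_abs_le_sum_sortedAbs_mul (x z : Fin p → ℝ) :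
    ∑ i, |x i| * |z i| ≤ ∑ i, sortedAbs x i * sortedAbs z i := by
  calc ∑ i, |x i| * |z i|
      = ∑ i, |x ((Tuple.sort fun j => |x j|) i)| * |z ((Tuple.sort fun j => |x j|) i)| :=
        (Equiv.sum_comp _ fun j => |x j| * |z j|).symm
    _ = ∑ i, sortedAbs x i *
          sortedAbs z (((Tuple.sort fun j => |x j|).trans (Tuple.sort fun j => |z j|).symm) i) := by
        simp only [Equiv.trans_apply, sortedAbs_sort_symm]
        rfl
    _ ≤ ∑ i, sortedAbs x i * sortedAbs z i :=
        ((sortedAbs_monotone x).monovary (sortedAbs_monotone z)).sum_mul_comp_perm_le_sum_mul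

lemma sum_sq_sortedAbs_sub_le (x z : Fin p → ℝ) :
    ∑ i, (sortedAbs x i - sortedAbs z i) ^ 2 ≤ ∑ i, (x i - z i) ^ 2 := by
  have expand : ∀ a b : Fin p → ℝ,
      ∑ i, (a i - b i) ^ 2 = ∑ i, a i ^ 2 + ∑ i, b i ^ 2 - 2 * ∑ i, a i * b i := by
    intro a b
    rw [mul_sum, ← sum_add_distrib, ← sum_sub_distrib]
    exact sum_congr rfl fun i _ => by ring
  have hmul : ∑ i, x i * z i ≤ ∑ i, sortedAbs x i * sortedAbs z i :=
    (sum_le_sum fun i _ => (le_abs_self _).trans (abs_mul _ _).le).trans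
      (sum_abs_mul_abs_le_sum_sortedAbs_mul x z)
  rw [expand, expand, sum_sortedAbs_sq, sum_sortedAbs_sq]
  linarith

lemma sum_mul_abs_comp_perm_le_sortedL1 {lam : Fin p → ℝ} (hm : Monotone lam)
    (x : Fin p → ℝ) (σ : Equiv.Perm (Fin p)) : ∑ i, lam i * |x (σ i)| ≤ sortedL1 lam x := by
  have hmono : Monovary lam (sortedAbs x) := hm.monovary (sortedAbs_monotone x)
  calc ∑ i, lam i * |x (σ i)|
      = ∑ i, lam i * sortedAbs x ((σ.trans (Tuple.sort fun j => |x j|).symm) i) := by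
        simp only [Equiv.trans_apply, sortedAbs_sort_symm]
    _ ≤ sortedL1 lam x := hmono.sum_mul_comp_perm_le_sum_mul

lemma sortedL1_nonneg {lam : Fin p → ℝ} (hn : ∀ i, 0 ≤ lam i) (x : Fin p → ℝ) :
    0 ≤ sortedL1 lam x :=
  sum_nonneg fun i _ => mul_nonneg (hn i) (abs_nonneg _)

lemma sortedL1_convexOn {lam : Fin p → ℝ} (hn : ∀ i, 0 ≤ lam i) (hm : Monotone lam) :
    ConvexOn ℝ Set.univ (sortedL1 lam) := by
  refine ⟨convex_univ, fun x _ z _ a b ha hb _ => ?_⟩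
  set σ := Tuple.sort fun j => |(a • x + b • z) j|
  have hσ (i : Fin p) :
      lam i * |(a • x + b • z) (σ i)| ≤ a * (lam i * |x (σ i)|) + b * (lam i * |z (σ i)|) := by
    have : |a * x (σ i) + b * z (σ i)| ≤ a * |x (σ i)| + b * |z (σ i)| := by
      simpa [abs_mul, abs_of_nonneg ha, abs_of_nonneg hb] using
        abs_add_le (a * x (σ i)) (b * z (σ i))
    simpa [mul_add, mul_left_comm] using mul_le_mul_of_nonneg_left this (hn i)
  calc sortedL1 lam (a • x + b • z) = ∑ i, lam i * |(a • x + b • z) (σ i)| := rfl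
    _ ≤ a * ∑ i, lam i * |x (σ i)| + b * ∑ i, lam i * |z (σ i)| := by
        rw [mul_sum, mul_sum, ← sum_add_distrib]
        exact sum_le_sum fun i _ => hσ i
    _ ≤ a • sortedL1 lam x + b • sortedL1 lam z := by
        simp only [smul_eq_mul]
        gcongr <;> exact sum_mul_abs_comp_perm_le_sortedL1 hm _ σ

end SortedL1

section SlopeProx

variable {p : ℕ} {lam y : Fin p → ℝ}

lemma tendsto_slopeObj_cocompact (hn : ∀ i, 0 ≤ lam i) :
    Tendsto (slopeObj lam y) (cocompact _) atTop := by
  refine tendsto_atTop_mono (fun x => ?_) <| ((tendsto_pow_atTop two_ne_zero).comp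
    (tendsto_dist_left_cocompact_atTop y)).const_mul_atTop (by norm_num : (0 : ℝ) < 1 / 2)
  have := sq_dist_le_sum_sq_sub y x
  have := sortedL1_nonneg hn x
  simp only [Function.comp_apply, slopeObj]
  linarith

lemma exists_forall_slopeObj_le (hn : ∀ i, 0 ≤ lam i) (hm : Monotone lam) :
    ∃ x, ∀ z, slopeObj lam y x ≤ slopeObj lam y z := by
  have hJ : Continuous (sortedL1 lam) :=
    continuousOn_univ.1 ((sortedL1_convexOn hn hm).continuousOn isOpen_univ)
  have hcont : Continuous (slopeObj lam y) := by
    unfold slopeObj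
    fun_prop
  exact hcont.exists_forall_le (tendsto_slopeObj_cocompact hn)

lemma slopeObj_slopeProx_le (hn : ∀ i, 0 ≤ lam i) (hm : Monotone lam) (z : Fin p → ℝ) :
    slopeObj lam y (slopeProx lam y) ≤ slopeObj lam y z := by
  have h := exists_forall_slopeObj_le (y := y) hn hm
  rw [slopeProx, dif_pos h]
  exact h.choose_spec z

lemma slopeObj_add_quarter_le_of_forall_le (hn : ∀ i, 0 ≤ lam i) (hm : Monotone lam)
    {x : Fin p → ℝ} (hx : ∀ z, slopeObj lam y x ≤ slopeObj lam y z) (z : Fin p → ℝ) :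
    slopeObj lam y x + (1 / 4) * ∑ i, (x i - z i) ^ 2 ≤ slopeObj lam y z := by
  have hmid := hx ((1 / 2 : ℝ) • x + (1 / 2 : ℝ) • z)
  have hJ := (sortedL1_convexOn hn hm).2 (Set.mem_univ x) (Set.mem_univ z)
    (by norm_num : (0 : ℝ) ≤ 1 / 2) (by norm_num : (0 : ℝ) ≤ 1 / 2) (by norm_num)
  have hquad : ∑ i, (y i - ((1 / 2 : ℝ) • x + (1 / 2 : ℝ) • z) i) ^ 2
      = (1 / 2) * ∑ i, (y i - x i) ^ 2 + (1 / 2) * ∑ i, (y i - z i) ^ 2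
        - (1 / 4) * ∑ i, (x i - z i) ^ 2 := by
    simp only [mul_sum, ← sum_add_distrib, ← sum_sub_distrib]
    exact sum_congr rfl fun i _ => by simp only [Pi.add_apply, Pi.smul_apply, smul_eq_mul]; ring
  simp only [slopeObj, smul_eq_mul] at hmid hJ ⊢
  rw [hquad] at hmid
  linarith

lemma slopeObj_cross_eq (lam₁ lam₂ y₁ y₂ x₁ x₂ : Fin p → ℝ) :
    slopeObj lam₁ y₁ x₂ - slopeObj lam₁ y₁ x₁ + (slopeObj lam₂ y₂ x₁ - slopeObj lam₂ y₂ x₂)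
      = ∑ i, (y₁ i - y₂ i) * (x₁ i - x₂ i)
        + ∑ i, (lam₁ i - lam₂ i) * (sortedAbs x₂ i - sortedAbs x₁ i) := by
  simp only [slopeObj, sortedL1, mul_sum, ← sum_add_distrib, ← sum_sub_distrib]
  exact sum_congr rfl fun i _ => by ring

end SlopeProx

theorem statement3 {p : ℕ} (lam₁ lam₂ y₁ y₂ : Fin p → ℝ)
    (h₁n : ∀ i, 0 ≤ lam₁ i) (h₁m : Monotone lam₁)
    (h₂n : ∀ i, 0 ≤ lam₂ i) (h₂m : Monotone lam₂) :
    Real.sqrt (∑ i, (slopeProx lam₁ y₁ i - slopeProx lam₂ y₂ i) ^ 2)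
      ≤ 2 * (Real.sqrt (∑ i, (lam₁ i - lam₂ i) ^ 2)
          + Real.sqrt (∑ i, (y₁ i - y₂ i) ^ 2)) := by
  set x₁ := slopeProx lam₁ y₁
  set x₂ := slopeProx lam₂ y₂
  set D := ∑ i, (x₁ i - x₂ i) ^ 2
  have hD : ∑ i, (x₂ i - x₁ i) ^ 2 = D := sum_congr rfl fun i _ => by ring
  have h₁ := slopeObj_add_quarter_le_of_forall_le h₁n h₁m
    (slopeObj_slopeProx_le (y := y₁) h₁n h₁m) x₂
  have h₂ := slopeObj_add_quarter_le_of_forall_le h₂n h₂m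
    (slopeObj_slopeProx_le (y := y₂) h₂n h₂m) x₁
  have hsort : √(∑ i, (sortedAbs x₂ i - sortedAbs x₁ i) ^ 2) ≤ √D :=
    Real.sqrt_le_sqrt (hD ▸ sum_sq_sortedAbs_sub_le x₂ x₁)
  rw [hD] at h₂
  refine Real.sqrt_le_of_le_mul_sqrt (by positivity) ?_
  calc D ≤ 2 * (slopeObj lam₁ y₁ x₂ - slopeObj lam₁ y₁ x₁
          + (slopeObj lam₂ y₂ x₁ - slopeObj lam₂ y₂ x₂)) := by linarith
    _ = 2 * (∑ i, (y₁ i - y₂ i) * (x₁ i - x₂ i)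
          + ∑ i, (lam₁ i - lam₂ i) * (sortedAbs x₂ i - sortedAbs x₁ i)) := by
        rw [slopeObj_cross_eq]
    _ ≤ 2 * (√(∑ i, (y₁ i - y₂ i) ^ 2) * √D + √(∑ i, (lam₁ i - lam₂ i) ^ 2) * √D) := by
        gcongr
        · exact Real.sum_mul_le_sqrt_mul_sqrt _ _ _
        · exact (Real.sum_mul_le_sqrt_mul_sqrt _ _ _).trans (by gcongr)
    _ = 2 * (√(∑ i, (lam₁ i - lam₂ i) ^ 2) + √(∑ i, (y₁ i - y₂ i) ^ 2)) * √D := by ring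
end

section
/- Let x⁽ᵖ⁾ ∈ ℝᵖ be a converging sequence whose empirical measures converge weakly to a probability measure with distribution function F, and suppose (1/p) Σ_{i=1}^p (x_i⁽ᵖ⁾)² → ∫ x² dF < ∞. Let F⁻¹(z) = inf{x : F(x) ≥ z} be the quantile function and let x_(1) ≤ ⋯ ≤ x_(p) denote the nondecreasing rearrangement of the entries of x⁽ᵖ⁾. Then (1/p) Σ_{i=1}^p ( x_(i) − F⁻¹(i/(p+1)) )² → 0 as p → ∞. -/
open MeasureTheory Filter Finset Topology

/-- The empirical measures `(1/p) ∑ δ_{x_i}` of the sequence of vectors `x⁽ᵖ⁾` converge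
weakly to the probability measure `μ` (tested against bounded continuous functions). -/
def EmpConverges (x : (p : ℕ) → Fin p → ℝ) (μ : Measure ℝ) : Prop :=
  ∀ f : BoundedContinuousFunction ℝ ℝ,
    Tendsto (fun p => (∑ i, f (x p i)) / (p : ℝ)) atTop (𝓝 (∫ t, f t ∂μ))

/-- The quantile function `F⁻¹(z) = inf {x : F(x) ≥ z}` of the distribution function
`F(t) = μ((-∞, t])` of the probability measure `μ`. -/
noncomputable def quantile (μ : Measure ℝ) (z : ℝ) : ℝ :=
  sInf {t : ℝ | z ≤ (μ (Set.Iic t)).toReal}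

/-!
With `k = ⌊p u⌋`, the order statistic `x_(k+1)` and the grid value `F⁻¹((k+1)/(p+1))` are step
functions `G_p u` and `H_p u` of `u ∈ (0, 1)`, and the average in question is
`∫₀¹ (G_p - H_p)²`. The quantile function `Q = F⁻¹` pushes the uniform distribution on `(0, 1)`
forward to `μ`, so `∫₀¹ Q² = ∫ t² dμ`. At every continuity point `u` of `Q`, hence almost
everywhere since `Q` is monotone, `G_p u → Q u` because the empirical distribution functions
converge at the non-atoms of `μ` (portmanteau), and `H_p u → Q u` because `(k+1)/(p+1) → u`.
The second-moment hypothesis says `∫ G_p² → ∫ Q²`, and `∫ H_p² → ∫ Q²` by dominated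
convergence. An a.e. convergent sequence whose `L²` norms converge converges in `L²` (F. Riesz,
from Fatou's lemma), so both `G_p` and `H_p` tend to `Q` in `L²`.
-/

open ProbabilityTheory
open scoped ENNReal
open Set (Ioo Icc Iic)

section L2Convergence

variable {α : Type*} [MeasurableSpace α] {μ : Measure α}

lemma eventually_lt_integral_of_tendsto_ae {f : ℕ → α → ℝ} {g : α → ℝ}
    (hf0 : ∀ n, 0 ≤ᵐ[μ] f n) (hfi : ∀ n, Integrable (f n) μ) (hg : Integrable g μ)
    (hlim : ∀ᵐ a ∂μ, Tendsto (fun n => f n a) atTop (𝓝 (g a))) {c : ℝ}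
    (hc : c < ∫ a, g a ∂μ) : ∀ᶠ n in atTop, c < ∫ a, f n a ∂μ := by
  rcases lt_or_ge c 0 with hc0 | hc0
  · exact Eventually.of_forall fun n => hc0.trans_le (integral_nonneg_of_ae (hf0 n))
  have hg0 : 0 ≤ᵐ[μ] g := by
    filter_upwards [hlim, ae_all_iff.2 hf0] with a ha ha0
    exact ge_of_tendsto' ha ha0
  have hliminf : ∀ᵐ a ∂μ,
      atTop.liminf (fun n => ENNReal.ofReal (f n a)) = ENNReal.ofReal (g a) := by
    filter_upwards [hlim] with a ha
    exact ((ENNReal.continuous_ofReal.tendsto _).comp ha).liminf_eq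
  have hfatou : ENNReal.ofReal c < atTop.liminf fun n => ∫⁻ a, ENNReal.ofReal (f n a) ∂μ :=
    calc ENNReal.ofReal c < ENNReal.ofReal (∫ a, g a ∂μ) :=
          (ENNReal.ofReal_lt_ofReal_iff_of_nonneg hc0).2 hc
      _ = ∫⁻ a, atTop.liminf (fun n => ENNReal.ofReal (f n a)) ∂μ := by
          rw [ofReal_integral_eq_lintegral_ofReal hg hg0, lintegral_congr_ae hliminf]
      _ ≤ _ := lintegral_liminf_le' fun n => (hfi n).aemeasurable.ennreal_ofReal
  filter_upwards [eventually_lt_of_lt_liminf hfatou] with n hn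
  rwa [← ofReal_integral_eq_lintegral_ofReal (hfi n) (hf0 n),
    ENNReal.ofReal_lt_ofReal_iff_of_nonneg hc0] at hn

lemma tendsto_integral_zero_of_le_of_tendsto_integral {F G : ℕ → α → ℝ} {g : α → ℝ}
    (hF0 : ∀ n, 0 ≤ᵐ[μ] F n) (hFG : ∀ n, F n ≤ᵐ[μ] G n)
    (hFi : ∀ n, Integrable (F n) μ) (hGi : ∀ n, Integrable (G n) μ) (hg : Integrable g μ)
    (hF : ∀ᵐ a ∂μ, Tendsto (fun n => F n a) atTop (𝓝 0))
    (hG : ∀ᵐ a ∂μ, Tendsto (fun n => G n a) atTop (𝓝 (g a)))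
    (hGg : Tendsto (fun n => ∫ a, G n a ∂μ) atTop (𝓝 (∫ a, g a ∂μ))) :
    Tendsto (fun n => ∫ a, F n a ∂μ) atTop (𝓝 0) := by
  refine tendsto_order.2 ⟨fun c hc => Eventually.of_forall fun n =>
    hc.trans_le (integral_nonneg_of_ae (hF0 n)), fun ε hε => ?_⟩
  have hdiff := eventually_lt_integral_of_tendsto_ae (f := fun n => G n - F n)
    (fun n => by filter_upwards [hFG n] with a ha using sub_nonneg.2 ha)
    (fun n => (hGi n).sub (hFi n)) hg
    (by filter_upwards [hF, hG] with a haF haG using by simpa using haG.sub haF)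
    (sub_lt_self _ (half_pos hε))
  have hG_lt := hGg.eventually (eventually_lt_nhds (lt_add_of_pos_right _ (half_pos hε)))
  filter_upwards [hdiff, hG_lt] with n hn hn'
  rw [Pi.sub_def, integral_sub (hGi n) (hFi n)] at hn
  linarith

lemma tendsto_integral_sq_sub_of_tendsto_ae {f : ℕ → α → ℝ} {g : α → ℝ}
    (hf : ∀ n, MemLp (f n) 2 μ) (hg : MemLp g 2 μ)
    (hlim : ∀ᵐ a ∂μ, Tendsto (fun n => f n a) atTop (𝓝 (g a)))
    (hsq : Tendsto (fun n => ∫ a, f n a ^ 2 ∂μ) atTop (𝓝 (∫ a, g a ^ 2 ∂μ))) :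
    Tendsto (fun n => ∫ a, (f n a - g a) ^ 2 ∂μ) atTop (𝓝 0) := by
  have hfi n := (hf n).integrable_sq
  have hgi := hg.integrable_sq
  refine tendsto_integral_zero_of_le_of_tendsto_integral
    (G := fun n a => 2 * f n a ^ 2 + 2 * g a ^ 2) (g := fun a => 4 * g a ^ 2)
    (fun n => Eventually.of_forall fun a => sq_nonneg _)
    (fun n => Eventually.of_forall fun a => by nlinarith [sq_nonneg (f n a + g a)])
    (fun n => ((hf n).sub hg).integrable_sq)
    (fun n => ((hfi n).const_mul 2).add (hgi.const_mul 2))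
    (hgi.const_mul 4) ?_ ?_ ?_
  · filter_upwards [hlim] with a ha
    simpa using (ha.sub_const (g a)).pow 2
  · filter_upwards [hlim] with a ha
    convert ((ha.pow 2).const_mul 2).add_const (2 * g a ^ 2) using 2
    ring
  · simp_rw [integral_add ((hfi _).const_mul 2) (hgi.const_mul 2), integral_const_mul]
    convert (hsq.const_mul 2).add_const (2 * ∫ a, g a ^ 2 ∂μ) using 2
    ring

lemma tendsto_integral_sq_sub_of_tendsto_integral_sq_sub {f h : ℕ → α → ℝ} {g : α → ℝ}
    (hf : ∀ n, MemLp (f n) 2 μ) (hh : ∀ n, MemLp (h n) 2 μ) (hg : MemLp g 2 μ)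
    (hfg : Tendsto (fun n => ∫ a, (f n a - g a) ^ 2 ∂μ) atTop (𝓝 0))
    (hhg : Tendsto (fun n => ∫ a, (h n a - g a) ^ 2 ∂μ) atTop (𝓝 0)) :
    Tendsto (fun n => ∫ a, (f n a - h n a) ^ 2 ∂μ) atTop (𝓝 0) := by
  refine squeeze_zero (fun n => integral_nonneg fun a => sq_nonneg _) (fun n => ?_)
    (by simpa using (hfg.const_mul 2).add (hhg.const_mul 2))
  have hfgi : Integrable (fun a => (f n a - g a) ^ 2) μ := ((hf n).sub hg).integrable_sq
  have hhgi : Integrable (fun a => (h n a - g a) ^ 2) μ := ((hh n).sub hg).integrable_sq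
  calc ∫ a, (f n a - h n a) ^ 2 ∂μ
      ≤ ∫ a, (2 * (f n a - g a) ^ 2 + 2 * (h n a - g a) ^ 2) ∂μ :=
        integral_mono ((hf n).sub (hh n)).integrable_sq
          ((hfgi.const_mul 2).add (hhgi.const_mul 2)) fun a => by
            nlinarith [sq_nonneg (f n a + h n a - 2 * g a)]
    _ = 2 * ∫ a, (f n a - g a) ^ 2 ∂μ + 2 * ∫ a, (h n a - g a) ^ 2 ∂μ := by
        rw [integral_add (hfgi.const_mul 2) (hhgi.const_mul 2), integral_const_mul,
          integral_const_mul]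

end L2Convergence

section Steps

lemma eqOn_comp_natFloor (c : ℕ → ℝ) (k : ℕ) :
    Set.EqOn (fun v => c ⌊v⌋₊) (fun _ => c k) (Ioo (k : ℝ) (k + 1)) := fun v hv => by
  simp only [Nat.floor_eq_on_Ico k v ⟨hv.1.le, hv.2⟩]

lemma intervalIntegrable_comp_natFloor (c : ℕ → ℝ) (k : ℕ) :
    IntervalIntegrable (fun v => c ⌊v⌋₊) volume k (k + 1) :=
  (intervalIntegrable_iff_integrableOn_Ioo_of_le (by linarith)).2 <|
    (integrableOn_const (by simp)).congr_fun (eqOn_comp_natFloor c k).symm measurableSet_Ioo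

lemma intervalIntegral_comp_natFloor (c : ℕ → ℝ) (k : ℕ) :
    ∫ v in (k : ℝ)..k + 1, c ⌊v⌋₊ = c k := by
  rw [intervalIntegral.integral_of_le (by linarith), integral_Ioc_eq_integral_Ioo,
    setIntegral_congr_fun measurableSet_Ioo (eqOn_comp_natFloor c k)]
  simp

lemma setIntegral_Ioo_comp_natFloor_mul (c : ℕ → ℝ) {p : ℕ} (hp : p ≠ 0) :
    ∫ u in Ioo (0 : ℝ) 1, c ⌊p * u⌋₊ = (∑ k ∈ range p, c k) / p := by
  have hsum := intervalIntegral.sum_integral_adjacent_intervals (μ := volume)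
    (a := fun k : ℕ => (k : ℝ)) (f := fun v => c ⌊v⌋₊) (n := p) fun k _ => by
      simpa using intervalIntegrable_comp_natFloor c k
  simp only [Nat.cast_add, Nat.cast_one, intervalIntegral_comp_natFloor, Nat.cast_zero] at hsum
  rw [← integral_Ioc_eq_integral_Ioo, ← intervalIntegral.integral_of_le zero_le_one,
    intervalIntegral.integral_comp_mul_left (fun v => c ⌊v⌋₊) (Nat.cast_ne_zero.2 hp),
    mul_zero, mul_one, ← hsum, smul_eq_mul, inv_mul_eq_div]

lemma natFloor_mul_lt {p : ℕ} {u : ℝ} (hp : p ≠ 0) (hu : u ∈ Ioo (0 : ℝ) 1) :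
    ⌊p * u⌋₊ < p := by
  have : (0 : ℝ) < p := by positivity
  rw [Nat.floor_lt (by nlinarith [hu.1])]
  nlinarith [hu.2]

lemma memLp_comp_natFloor_mul (c : ℕ → ℝ) (p : ℕ) (q : ℝ≥0∞) :
    MemLp (fun u : ℝ => c ⌊p * u⌋₊) q (volume.restrict (Ioo (0 : ℝ) 1)) := by
  refine MemLp.of_bound ((measurable_of_countable c).comp
    (Nat.measurable_floor.comp (measurable_const_mul _))).aestronglyMeasurable
    (∑ k ∈ range (p + 1), ‖c k‖) ?_
  filter_upwards [ae_restrict_mem measurableSet_Ioo] with u hu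
  refine single_le_sum (f := fun k => ‖c k‖) (fun _ _ => norm_nonneg _)
    (mem_range.2 (Nat.lt_succ_of_le (Nat.floor_le_of_le ?_)))
  nlinarith [hu.2, (Nat.cast_nonneg p : (0 : ℝ) ≤ p)]

lemma integrableOn_Ioo_comp_add_div_two {g : ℝ → ℝ} (hg : IntegrableOn g (Ioo (0 : ℝ) 1))
    {a : ℝ} (ha0 : 0 ≤ a) (ha : a ≤ 1 / 2) :
    IntegrableOn (fun u => g (a + u / 2)) (Ioo (0 : ℝ) 1) := by
  have h01 : IntervalIntegrable g volume 0 1 :=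
    (intervalIntegrable_iff_integrableOn_Ioo_of_le zero_le_one).2 hg
  have h := (h01.comp_mul_left (c := 1 / 2)).comp_add_right (2 * a)
  have hsub : Set.uIcc (0 : ℝ) 1 ⊆ Set.uIcc (0 / (1 / 2) - 2 * a) (1 / (1 / 2) - 2 * a) := by
    rw [Set.uIcc_of_le zero_le_one, Set.uIcc_of_le (by linarith)]
    exact Set.Icc_subset_Icc (by linarith) (by linarith)
  have h' := (intervalIntegrable_iff_integrableOn_Ioo_of_le zero_le_one).1 (h.mono_set hsub)
  exact h'.congr_fun (fun u _ => by ring_nf) measurableSet_Ioo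

end Steps

section Empirical

variable {α : Type*} [MeasurableSpace α] {p : ℕ}

noncomputable def empiricalMeasure (v : Fin p → α) : Measure α :=
  (p : ℝ≥0∞)⁻¹ • ∑ i, Measure.dirac (v i)

instance [NeZero p] (v : Fin p → α) : IsProbabilityMeasure (empiricalMeasure v) :=
  ⟨by simp [empiricalMeasure, ENNReal.inv_mul_cancel (NeZero.ne (p : ℝ≥0∞))]⟩

variable [MeasurableSingletonClass α]

lemma integral_empiricalMeasure (v : Fin p → α) (f : α → ℝ) :
    ∫ a, f a ∂empiricalMeasure v = (∑ i, f (v i)) / p := by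
  rw [empiricalMeasure, integral_smul_measure, integral_finsetSum_measure]
  · simp [div_eq_inv_mul]
  · exact fun i _ => integrable_dirac (by simp)

lemma empiricalMeasure_real_apply (v : Fin p → α) (s : Set α) [DecidablePred (· ∈ s)] :
    (empiricalMeasure v).real s = (#{i | v i ∈ s} : ℝ) / p := by
  simp [empiricalMeasure, measureReal_def, Measure.dirac_apply, Set.indicator, div_eq_inv_mul]

end Empirical

section OrderStatistic

variable {α : Type*} [LinearOrder α] [Zero α] {p : ℕ}

/-- The `k`-th smallest entry of `v`, counting from `0`; it is `0` for `k ≥ p`. -/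
noncomputable def orderStatistic (v : Fin p → α) (k : ℕ) : α :=
  if h : k < p then v (Tuple.sort v ⟨k, h⟩) else 0

lemma orderStatistic_of_lt (v : Fin p → α) {k : ℕ} (hk : k < p) :
    orderStatistic v k = v (Tuple.sort v ⟨k, hk⟩) :=
  dif_pos hk

lemma orderStatistic_le_iff (v : Fin p → α) {k : ℕ} (hk : k < p) (t : α) :
    orderStatistic v k ≤ t ↔ k < #{i | v i ≤ t} := by
  have hcard : #{i | v (Tuple.sort v i) ≤ t} = #{i | v i ≤ t} :=
    card_equiv (Tuple.sort v) fun i => by simp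
  rw [orderStatistic_of_lt v hk, ← hcard]
  exact (Tuple.lt_card_le_iff_apply_le_of_monotone (j := ⟨k, hk⟩) (Tuple.monotone_sort v)).symm

lemma sum_range_orderStatistic {M : Type*} [AddCommMonoid M] (v : Fin p → α) (f : α → M) :
    ∑ k ∈ range p, f (orderStatistic v k) = ∑ i, f (v i) := by
  rw [← Fin.sum_univ_eq_sum_range (fun k => f (orderStatistic v k)),
    ← Equiv.sum_comp (Tuple.sort v) (fun i => f (v i))]
  exact sum_congr rfl fun i _ => by rw [orderStatistic_of_lt v i.isLt]

end OrderStatistic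

lemma setIntegral_sq_orderStatistic_natFloor_mul {p : ℕ} (v : Fin p → ℝ) (hp : p ≠ 0) :
    ∫ u in Ioo (0 : ℝ) 1, orderStatistic v ⌊p * u⌋₊ ^ 2 = (∑ i, v i ^ 2) / p := by
  rw [setIntegral_Ioo_comp_natFloor_mul (fun k => orderStatistic v k ^ 2) hp,
    sum_range_orderStatistic v fun a => a ^ 2]

section Quantile

variable {μ : Measure ℝ} [IsProbabilityMeasure μ] {z t : ℝ}

lemma quantile_eq_sInf_cdf (z : ℝ) :
    quantile μ z = sInf {t | z ≤ cdf μ t} := by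
  simp only [quantile, cdf_eq_real, measureReal_def]

omit [IsProbabilityMeasure μ] in
lemma bddBelow_setOf_le_cdf (hz : 0 < z) : BddBelow {t | z ≤ cdf μ t} := by
  obtain ⟨t₀, ht₀⟩ :=
    ((tendsto_cdf_atBot (μ := μ)).eventually (eventually_lt_nhds hz)).exists
  exact ⟨t₀, fun s hs => le_of_not_gt fun hst =>
    (hs.trans (monotone_cdf μ hst.le)).not_gt ht₀⟩

/-- Right-continuity of the cdf makes the infimum defining the quantile attained. -/
lemma le_cdf_quantile (hz0 : 0 < z) (hz1 : z < 1) : z ≤ cdf μ (quantile μ z) := by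
  set S := {t | z ≤ cdf μ t}
  have hne : S.Nonempty :=
    ((tendsto_cdf_atTop (μ := μ)).eventually (eventually_ge_nhds hz1)).exists
  have hbdd : BddBelow S := bddBelow_setOf_le_cdf hz0
  have : (𝓝[S] sInf S).NeBot :=
    mem_closure_iff_nhdsWithin_neBot.1 (csInf_mem_closure hne hbdd)
  have hcont : Tendsto (cdf μ) (𝓝[S] sInf S) (𝓝 (cdf μ (sInf S))) :=
    ((cdf μ).right_continuous _).tendsto.mono_left
      (nhdsWithin_mono _ fun s hs => csInf_le hbdd hs)
  rw [quantile_eq_sInf_cdf]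
  exact ge_of_tendsto hcont (eventually_nhdsWithin_of_forall fun s hs => hs)

lemma quantile_le_iff (hz0 : 0 < z) (hz1 : z < 1) : quantile μ z ≤ t ↔ z ≤ cdf μ t :=
  ⟨fun h => (le_cdf_quantile hz0 hz1).trans (monotone_cdf μ h),
    fun h => (quantile_eq_sInf_cdf z).trans_le (csInf_le (bddBelow_setOf_le_cdf hz0) h)⟩

lemma monotoneOn_quantile : MonotoneOn (quantile μ) (Ioo 0 1) := fun _ hz _ hw hzw =>
  (quantile_le_iff hz.1 hz.2).2 (hzw.trans (le_cdf_quantile hw.1 hw.2))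

lemma aemeasurable_quantile : AEMeasurable (quantile μ) (volume.restrict (Ioo 0 1)) :=
  aemeasurable_restrict_of_monotoneOn measurableSet_Ioo monotoneOn_quantile

lemma map_quantile : (volume.restrict (Ioo 0 1)).map (quantile μ) = μ := by
  refine Measure.ext_of_Iic _ _ fun t => ?_
  have hpre : quantile μ ⁻¹' Iic t ∩ Ioo 0 1 = Set.Ioc 0 (cdf μ t) ∩ Ioo 0 1 := by
    ext z
    simp only [Set.mem_inter_iff, Set.mem_preimage, Set.mem_Iic, Set.mem_Ioc, Set.mem_Ioo]
    constructor
    · rintro ⟨h, hz⟩; exact ⟨⟨hz.1, (quantile_le_iff hz.1 hz.2).1 h⟩, hz⟩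
    · rintro ⟨h, hz⟩; exact ⟨(quantile_le_iff hz.1 hz.2).2 h.2, hz⟩
  rw [Measure.map_apply_of_aemeasurable aemeasurable_quantile measurableSet_Iic,
    Measure.restrict_apply' measurableSet_Ioo, hpre, ← ofReal_cdf]
  rcases (cdf_le_one μ t).lt_or_eq with h | h
  · rw [Set.inter_eq_left.2 (Set.Ioc_subset_Ioo_right h), Real.volume_Ioc, sub_zero]
  · rw [h, Set.inter_eq_right.2 Set.Ioo_subset_Ioc_self, Real.volume_Ioo, sub_zero]

lemma setIntegral_comp_quantile {g : ℝ → ℝ} (hg : AEStronglyMeasurable g μ) :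
    ∫ u in Ioo 0 1, g (quantile μ u) = ∫ t, g t ∂μ := by
  rw [← map_quantile (μ := μ)] at hg
  rw [← integral_map aemeasurable_quantile hg, map_quantile]

lemma integrableOn_comp_quantile {g : ℝ → ℝ} (hg : Integrable g μ) :
    IntegrableOn (fun u => g (quantile μ u)) (Ioo 0 1) := by
  rw [← map_quantile (μ := μ)] at hg
  exact hg.comp_aemeasurable aemeasurable_quantile

lemma ae_continuousAt_quantile :
    ∀ᵐ u : ℝ ∂volume.restrict (Ioo (0 : ℝ) 1), ContinuousAt (quantile μ) u := by
  have hnull :=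
    (monotoneOn_quantile (μ := μ)).countable_not_continuousWithinAt.measure_zero volume
  rw [ae_restrict_iff' measurableSet_Ioo]
  filter_upwards [measure_eq_zero_iff_ae_notMem.1 hnull] with u hu hu01
  exact (not_not.1 fun h => hu ⟨hu01, h⟩).continuousAt (Ioo_mem_nhds hu01.1 hu01.2)

end Quantile

lemma exists_measure_singleton_eq_zero_mem_Ioo (μ : Measure ℝ) [SFinite μ] {a b : ℝ}
    (hab : a < b) : ∃ t ∈ Ioo a b, μ {t} = 0 := by
  have hatoms : {t : ℝ | 0 < μ {t}}.Countable := by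
    simpa [Set.ofPred_eq_eq_singleton] using Measure.countable_meas_level_set_pos (μ := μ)
      (measurable_id (α := ℝ))
  obtain ⟨t, ht, hat, htb⟩ := (hatoms.dense_compl ℝ).exists_between hab
  exact ⟨t, ⟨hat, htb⟩, by simpa using ht⟩

lemma tendsto_card_le_div_of_empConverges {x : (p : ℕ) → Fin p → ℝ} {μ : Measure ℝ}
    [IsProbabilityMeasure μ] (hconv : EmpConverges x μ) {t : ℝ} (ht : μ {t} = 0) :
    Tendsto (fun p => (#{i | x p i ≤ t} : ℝ) / p) atTop (𝓝 (cdf μ t)) := by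
  let ν : ℕ → ProbabilityMeasure ℝ := fun p =>
    ⟨empiricalMeasure (x (p + 1)), inferInstance⟩
  have hν : Tendsto ν atTop (𝓝 ⟨μ, inferInstance⟩) :=
    ProbabilityMeasure.tendsto_iff_forall_integral_tendsto.2 fun f => by
      simpa [ν, integral_empiricalMeasure, Function.comp_def] using
        (hconv f).comp (tendsto_add_atTop_nat 1)
  have hIic := ProbabilityMeasure.tendsto_measure_of_null_frontier_of_tendsto' hν
    (E := Iic t) (by simpa [frontier_Iic] using ht)
  rw [← tendsto_add_atTop_iff_nat 1, cdf_eq_real]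
  simpa [ν, Function.comp_def, ← measureReal_def, empiricalMeasure_real_apply] using
    (ENNReal.tendsto_toReal (measure_ne_top μ (Iic t))).comp hIic

section OrderStatisticLimit

variable {x : (p : ℕ) → Fin p → ℝ} {μ : Measure ℝ} [IsProbabilityMeasure μ] {t u : ℝ}

lemma eventually_lt_orderStatistic (hconv : EmpConverges x μ) (ht : μ {t} = 0)
    (hu : u ∈ Ioo (0 : ℝ) 1) (htu : cdf μ t < u) :
    ∀ᶠ p in atTop, t < orderStatistic (x p) ⌊p * u⌋₊ := by
  have hecdf := tendsto_card_le_div_of_empConverges hconv ht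
  filter_upwards [hecdf.eventually (eventually_lt_nhds htu), eventually_ne_atTop 0]
    with p hcount hp
  have hp' : (0 : ℝ) < p := by positivity
  rw [← not_le, orderStatistic_le_iff _ (natFloor_mul_lt hp hu), not_lt]
  rw [div_lt_iff₀ hp'] at hcount
  exact Nat.le_floor (by linarith)

lemma eventually_orderStatistic_le (hconv : EmpConverges x μ) (ht : μ {t} = 0)
    (hu : u ∈ Ioo (0 : ℝ) 1) (hut : u < cdf μ t) :
    ∀ᶠ p in atTop, orderStatistic (x p) ⌊p * u⌋₊ ≤ t := by
  have hecdf := tendsto_card_le_div_of_empConverges hconv ht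
  filter_upwards [hecdf.eventually (eventually_gt_nhds hut), eventually_ne_atTop 0]
    with p hcount hp
  have hp' : (0 : ℝ) < p := by positivity
  rw [orderStatistic_le_iff _ (natFloor_mul_lt hp hu), Nat.floor_lt (by nlinarith [hu.1])]
  rwa [lt_div_iff₀ hp', mul_comm] at hcount

lemma tendsto_orderStatistic_natFloor_mul (hconv : EmpConverges x μ) (hu : u ∈ Ioo (0 : ℝ) 1)
    (hcont : ContinuousAt (quantile μ) u) :
    Tendsto (fun p => orderStatistic (x p) ⌊p * u⌋₊) atTop (𝓝 (quantile μ u)) := by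
  refine tendsto_order.2 ⟨fun c hc => ?_, fun c hc => ?_⟩
  · obtain ⟨t, ⟨hct, htq⟩, ht⟩ := exists_measure_singleton_eq_zero_mem_Ioo μ hc
    have htu : cdf μ t < u := lt_of_not_ge fun h => htq.not_ge ((quantile_le_iff hu.1 hu.2).2 h)
    filter_upwards [eventually_lt_orderStatistic hconv ht hu htu] with p hp
    exact hct.trans hp
  · obtain ⟨u', ⟨hu'c, hu'⟩, huu'⟩ := (((hcont.eventually (eventually_lt_nhds hc)).and
      (Ioo_mem_nhds hu.1 hu.2)).filter_mono nhdsWithin_le_nhds |>.and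
      (self_mem_nhdsWithin (s := Set.Ioi u))).exists
    obtain ⟨t, ⟨hqt, htc⟩, ht⟩ := exists_measure_singleton_eq_zero_mem_Ioo μ hu'c
    have hut : u < cdf μ t := huu'.trans_le ((quantile_le_iff hu'.1 hu'.2).1 hqt.le)
    filter_upwards [eventually_orderStatistic_le hconv ht hu hut] with p hp
    exact hp.trans_lt htc

lemma ae_tendsto_orderStatistic_natFloor_mul (hconv : EmpConverges x μ) :
    ∀ᵐ u : ℝ ∂volume.restrict (Ioo (0 : ℝ) 1),
      Tendsto (fun p => orderStatistic (x p) ⌊p * u⌋₊) atTop (𝓝 (quantile μ u)) := by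
  filter_upwards [ae_continuousAt_quantile (μ := μ), ae_restrict_mem measurableSet_Ioo]
    with u hcont hu
  exact tendsto_orderStatistic_natFloor_mul hconv hu hcont

end OrderStatisticLimit

lemma sq_le_sq_add_sq_of_le_of_le {a b c : ℝ} (hab : a ≤ b) (hbc : b ≤ c) :
    b ^ 2 ≤ a ^ 2 + c ^ 2 := by
  rcases le_total 0 b with hb | hb <;> nlinarith

section QuantileGrid

variable {μ : Measure ℝ} [IsProbabilityMeasure μ] {p : ℕ} {u : ℝ}

lemma natFloor_mul_add_one_div_mem_Icc (hp : p ≠ 0) (hu : u ∈ Ioo (0 : ℝ) 1) :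
    ((⌊p * u⌋₊ : ℝ) + 1) / (p + 1) ∈ Icc (u / 2) ((1 + u) / 2) := by
  have hp1 : (1 : ℝ) ≤ p := Nat.one_le_cast.2 (Nat.one_le_iff_ne_zero.2 hp)
  have hfl := Nat.floor_le (mul_nonneg (Nat.cast_nonneg p) hu.1.le)
  have hlt := Nat.lt_floor_add_one ((p : ℝ) * u)
  constructor
  · rw [div_le_div_iff₀ two_pos (by positivity)]
    nlinarith [hu.1]
  · rw [div_le_div_iff₀ (by positivity) two_pos]
    nlinarith [mul_nonneg (sub_nonneg.2 hp1) (sub_nonneg.2 hu.2.le)]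

lemma tendsto_natFloor_mul_add_one_div (hu : 0 ≤ u) :
    Tendsto (fun p : ℕ => ((⌊p * u⌋₊ : ℝ) + 1) / (p + 1)) atTop (𝓝 u) := by
  have hfloor : Tendsto (fun p : ℕ => (⌊p * u⌋₊ : ℝ) / p) atTop (𝓝 u) := by
    simpa only [Function.comp_def, mul_comm u] using
      (tendsto_nat_floor_mul_div_atTop hu).comp tendsto_natCast_atTop_atTop
  have hinv : Tendsto (fun p : ℕ => (p : ℝ)⁻¹) atTop (𝓝 0) := tendsto_inv_atTop_zero.comp
    tendsto_natCast_atTop_atTop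
  have hlim :=
    (hfloor.add hinv).div (tendsto_const_nhds.add hinv) (by norm_num : (1 : ℝ) + 0 ≠ 0)
  rw [add_zero, add_zero, div_one] at hlim
  refine hlim.congr' ?_
  filter_upwards [eventually_ne_atTop 0] with p hp
  simp only [Pi.div_apply]
  field_simp

lemma sq_quantile_natFloor_mul_le (hp : p ≠ 0) (hu : u ∈ Ioo (0 : ℝ) 1) :
    quantile μ (((⌊p * u⌋₊ : ℝ) + 1) / (p + 1)) ^ 2
      ≤ quantile μ (u / 2) ^ 2 + quantile μ ((1 + u) / 2) ^ 2 := by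
  have hv := natFloor_mul_add_one_div_mem_Icc hp hu
  have hIoo {w : ℝ} (hw : w ∈ Icc (u / 2) ((1 + u) / 2)) : w ∈ Ioo (0 : ℝ) 1 :=
    ⟨by linarith [hw.1, hu.1], by linarith [hw.2, hu.2]⟩
  have hlo := monotoneOn_quantile (μ := μ) (hIoo ⟨le_rfl, by linarith [hu.1]⟩) (hIoo hv) hv.1
  have hhi := monotoneOn_quantile (μ := μ) (hIoo hv) (hIoo ⟨by linarith [hu.2], le_rfl⟩) hv.2
  exact sq_le_sq_add_sq_of_le_of_le hlo hhi

lemma ae_tendsto_quantile_natFloor_mul :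
    ∀ᵐ u : ℝ ∂volume.restrict (Ioo (0 : ℝ) 1),
      Tendsto (fun p : ℕ => quantile μ ((⌊p * u⌋₊ + 1) / (p + 1))) atTop
        (𝓝 (quantile μ u)) := by
  filter_upwards [ae_continuousAt_quantile (μ := μ), ae_restrict_mem measurableSet_Ioo]
    with u hcont hu
  exact hcont.tendsto.comp (tendsto_natFloor_mul_add_one_div hu.1.le)

lemma tendsto_setIntegral_sq_quantile_natFloor_mul (h2int : Integrable (fun t => t ^ 2) μ) :
    Tendsto
      (fun p : ℕ => ∫ u in Ioo (0 : ℝ) 1, quantile μ ((⌊p * u⌋₊ + 1) / (p + 1)) ^ 2)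
      atTop (𝓝 (∫ u in Ioo (0 : ℝ) 1, quantile μ u ^ 2)) := by
  have hQ : IntegrableOn (fun u => quantile μ u ^ 2) (Ioo (0 : ℝ) 1) :=
    integrableOn_comp_quantile h2int
  have hbound : IntegrableOn (fun u => quantile μ (u / 2) ^ 2 + quantile μ ((1 + u) / 2) ^ 2)
      (Ioo (0 : ℝ) 1) :=
    ((integrableOn_Ioo_comp_add_div_two hQ le_rfl (by norm_num)).add
      (integrableOn_Ioo_comp_add_div_two hQ (by norm_num) le_rfl)).congr_fun
      (fun u _ => by simp only [Pi.add_apply]; ring_nf) measurableSet_Ioo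
  refine tendsto_integral_filter_of_dominated_convergence _
    (Eventually.of_forall fun p => (memLp_comp_natFloor_mul
      (fun k => quantile μ ((k + 1) / (p + 1)) ^ 2) p 1).aestronglyMeasurable) ?_ hbound ?_
  · filter_upwards [eventually_ne_atTop 0] with p hp
    filter_upwards [ae_restrict_mem measurableSet_Ioo] with u hu
    rw [Real.norm_of_nonneg (sq_nonneg _)]
    exact sq_quantile_natFloor_mul_le hp hu
  · filter_upwards [ae_tendsto_quantile_natFloor_mul (μ := μ)] with u hu using hu.pow 2

end QuantileGrid

theorem statement4
    (x : (p : ℕ) → Fin p → ℝ) (μ : Measure ℝ) (hμ : IsProbabilityMeasure μ)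
    (hconv : EmpConverges x μ)
    (h2int : Integrable (fun t => t ^ 2) μ)
    (h2 : Tendsto (fun p => (∑ i, (x p i) ^ 2) / (p : ℝ)) atTop (𝓝 (∫ t, t ^ 2 ∂μ))) :
    Tendsto (fun p => (∑ i : Fin p,
        (x p (Tuple.sort (x p) i) - quantile μ (((i : ℕ) + 1 : ℝ) / ((p : ℝ) + 1))) ^ 2)
      / (p : ℝ)) atTop (𝓝 0) := by
  have hQ : MemLp (quantile μ) 2 (volume.restrict (Ioo (0 : ℝ) 1)) :=
    (memLp_two_iff_integrable_sq aemeasurable_quantile.aestronglyMeasurable).2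
      (integrableOn_comp_quantile h2int)
  have hQsq : ∫ u in Ioo (0 : ℝ) 1, quantile μ u ^ 2 = ∫ t, t ^ 2 ∂μ :=
    setIntegral_comp_quantile (continuous_pow 2).aestronglyMeasurable
  have hG := tendsto_integral_sq_sub_of_tendsto_ae
    (fun p => memLp_comp_natFloor_mul (orderStatistic (x p)) p 2) hQ
    (ae_tendsto_orderStatistic_natFloor_mul hconv) <| by
      rw [hQsq]
      refine h2.congr' ?_
      filter_upwards [eventually_ne_atTop 0] with p hp
      exact (setIntegral_sq_orderStatistic_natFloor_mul (x p) hp).symm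
  have hH := tendsto_integral_sq_sub_of_tendsto_ae
    (fun p => memLp_comp_natFloor_mul (fun k => quantile μ ((k + 1) / (p + 1))) p 2) hQ
    ae_tendsto_quantile_natFloor_mul (tendsto_setIntegral_sq_quantile_natFloor_mul h2int)
  refine (tendsto_integral_sq_sub_of_tendsto_integral_sq_sub
    (fun p => memLp_comp_natFloor_mul (orderStatistic (x p)) p 2)
    (fun p => memLp_comp_natFloor_mul (fun k => quantile μ ((k + 1) / (p + 1))) p 2)
    hQ hG hH).congr' ?_
  filter_upwards [eventually_ne_atTop 0] with p hp
  rw [setIntegral_Ioo_comp_natFloor_mul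
    (fun k => (orderStatistic (x p) k - quantile μ ((k + 1) / (p + 1))) ^ 2) hp,
    ← Fin.sum_univ_eq_sum_range]
  simp only [orderStatistic_of_lt _ (Fin.is_lt _)]
end

section
/- In the discrete balance-point setting, fix j with k₂ ≤ j ≤ k₃. Then: (1) aver(i,j) < aver(i−1,j) for every i with i*(j) < i ≤ k₁; (2) aver(i,j) ≥ a_{i−1} for every i with 2 ≤ i ≤ i*(j); (3) aver(i,j) ≥ aver(i−1,j) for every i with 2 ≤ i ≤ i*(j). -/
/-!
`aver a m j` is a weighted mean of `a m` and `aver a (m + 1) j` with positive weights, so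
`aver a (m + 1) j < aver a m j ↔ aver a (m + 1) j < a m` and
`aver a m j < a m ↔ aver a (m + 1) j < a m`. The first equivalence turns (2), which is the
minimality in the definition of `i*(j)`, into (3). For (1), the second equivalence and the
monotonicity of `a` on `[1, k₁]` carry the inequality `aver a i j < a (i - 1)` that defines
`i = i*(j) + 1` up to every `i ≤ k₁`, and the first equivalence converts it.
-/

open Finset

/-- `aver a i j = (∑_{l=i}^j a_l)/(j − i + 1)`. -/
noncomputable def aver (a : ℕ → ℝ) (i j : ℕ) : ℝ :=
  (∑ l ∈ Finset.Icc i j, a l) / ((j : ℝ) - (i : ℝ) + 1)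

open Classical in
/-- The left balance point `i*(j)`. -/
noncomputable def istar (a : ℕ → ℝ) (k₁ j : ℕ) : ℕ :=
  if h : ((Finset.Icc 2 k₁).filter fun i => aver a i j < a (i - 1)).Nonempty
  then ((Finset.Icc 2 k₁).filter fun i => aver a i j < a (i - 1)).min' h - 1
  else k₁

open Classical in
/-- The right balance point `j*`. -/
noncomputable def jstar (a : ℕ → ℝ) (k₁ k₂ k₃ : ℕ) : ℕ :=
  if h : ((Finset.Icc k₂ (k₃ - 1)).filter fun j => a (j + 1) < aver a (istar a k₁ j) j).Nonempty
  then ((Finset.Icc k₂ (k₃ - 1)).filter fun j => a (j + 1) < aver a (istar a k₁ j) j).max' h + 1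
  else k₂

section aver

variable {a : ℕ → ℝ} {m j : ℕ}

theorem mul_aver_eq_add (h : m < j) :
    ((j : ℝ) - m + 1) * aver a m j = a m + ((j : ℝ) - m) * aver a (m + 1) j := by
  have hm : (m : ℝ) < j := by exact_mod_cast h
  have hlen : (j : ℝ) - m ≠ 0 := by linarith
  have hlen' : (j : ℝ) - m + 1 ≠ 0 := by linarith
  unfold aver
  rw [← add_sum_Ioc_eq_sum_Icc h.le, ← Icc_add_one_left_eq_Ioc]
  push_cast
  rw [show (j : ℝ) - (m + 1) + 1 = j - m by ring]
  field_simp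

theorem aver_succ_lt_aver_iff (h : m < j) :
    aver a (m + 1) j < aver a m j ↔ aver a (m + 1) j < a m := by
  have hm : (m : ℝ) < j := by exact_mod_cast h
  have key := mul_aver_eq_add (a := a) h
  constructor <;> intro <;> nlinarith

theorem aver_lt_iff_aver_succ_lt (h : m < j) :
    aver a m j < a m ↔ aver a (m + 1) j < a m := by
  have hm : (m : ℝ) < j := by exact_mod_cast h
  have key := mul_aver_eq_add (a := a) h
  constructor <;> intro <;> nlinarith

theorem aver_succ_lt_of_monotone {k n₀ : ℕ} (hmono : ∀ i, 1 ≤ i → i + 1 ≤ k → a i ≤ a (i + 1))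
    (hkj : k < j) (h₁ : 1 ≤ n₀) (h₀ : aver a (n₀ + 1) j < a n₀) {n : ℕ} (hn : n₀ ≤ n)
    (hnk : n + 1 ≤ k) : aver a (n + 1) j < a n := by
  induction n, hn using Nat.le_induction with
  | base => exact h₀
  | succ n hn ih =>
    have hlt : aver a (n + 1) j < a (n + 1) :=
      (ih (by omega)).trans_le (hmono n (by omega) (by omega))
    exact (aver_lt_iff_aver_succ_lt (by omega)).1 hlt

end aver

section istar

variable {a : ℕ → ℝ} {k₁ j i : ℕ}

theorem istar_le : istar a k₁ j ≤ k₁ := by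
  unfold istar
  split_ifs with hne
  · have := (mem_Icc.1 (mem_filter.1 (min'_mem _ hne)).1).2
    omega
  · rfl

theorem le_aver_of_le_istar (h2 : 2 ≤ i) (hi : i ≤ istar a k₁ j) : a (i - 1) ≤ aver a i j := by
  have hik : i ≤ k₁ := hi.trans istar_le
  by_contra! hlt
  unfold istar at hi
  split_ifs at hi with hne
  · have := hi.trans (Nat.sub_le_sub_right
      (min'_le _ i (by rw [mem_filter]; exact ⟨mem_Icc.2 ⟨h2, hik⟩, hlt⟩)) 1)
    omega
  · exact hne ⟨i, by rw [mem_filter]; exact ⟨mem_Icc.2 ⟨h2, hik⟩, hlt⟩⟩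

theorem aver_istar_succ_lt (h : istar a k₁ j < k₁) :
    1 ≤ istar a k₁ j ∧ aver a (istar a k₁ j + 1) j < a (istar a k₁ j) := by
  unfold istar at h ⊢
  split_ifs with hne
  · obtain ⟨hmem, hlt⟩ := mem_filter.1 (min'_mem _ hne)
    have h2 := (mem_Icc.1 hmem).1
    refine ⟨by omega, ?_⟩
    rwa [Nat.sub_add_cancel (by omega)]
  · rw [dif_neg hne] at h
    exact (lt_irrefl k₁ h).elim

end istar

theorem statement5_general
    (k₁ k₂ : ℕ) (a : ℕ → ℝ)
    (hk₁₂ : k₁ < k₂)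
    (hmono1 : ∀ i, 1 ≤ i → i + 1 ≤ k₁ → a i ≤ a (i + 1))
    (j : ℕ) (hj₁ : k₂ ≤ j) :
    (∀ i, istar a k₁ j < i → i ≤ k₁ → aver a i j < aver a (i - 1) j) ∧
    (∀ i, 2 ≤ i → i ≤ istar a k₁ j → a (i - 1) ≤ aver a i j) ∧
    (∀ i, 2 ≤ i → i ≤ istar a k₁ j → aver a (i - 1) j ≤ aver a i j) := by
  have hk₁j : k₁ < j := hk₁₂.trans_le hj₁
  refine ⟨fun i hi hik => ?_, fun i h2 hi => le_aver_of_le_istar h2 hi, fun i h2 hi => ?_⟩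
  · obtain ⟨n, rfl⟩ : ∃ n, i = n + 1 := ⟨i - 1, by omega⟩
    obtain ⟨h₁, h₀⟩ := aver_istar_succ_lt (hi.trans_le hik)
    have hlt := aver_succ_lt_of_monotone hmono1 hk₁j h₁ h₀ (by omega) hik
    simpa using (aver_succ_lt_aver_iff (by omega)).2 hlt
  · obtain ⟨n, rfl⟩ : ∃ n, i = n + 1 := ⟨i - 1, by omega⟩
    have hle := le_aver_of_le_istar h2 hi
    have hn : n < j := by have := istar_le (a := a) (k₁ := k₁) (j := j); omega
    simp only [Nat.add_sub_cancel] at hle ⊢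
    exact not_lt.1 (mt (aver_succ_lt_aver_iff hn).1 hle.not_gt)

theorem statement5
    (p k₁ k₂ k₃ : ℕ) (a : ℕ → ℝ)
    (hk₁ : 1 ≤ k₁) (hk₁₂ : k₁ < k₂) (hk₂₃ : k₂ ≤ k₃) (hk₃p : k₃ ≤ p)
    (hmono1 : ∀ i, 1 ≤ i → i + 1 ≤ k₁ → a i ≤ a (i + 1))
    (hdec : ∀ i, k₁ ≤ i → i + 1 ≤ k₂ → a (i + 1) < a i)
    (hmono3 : ∀ i, k₂ ≤ i → i + 1 ≤ k₃ → a i ≤ a (i + 1))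
    (j : ℕ) (hj₁ : k₂ ≤ j) (hj₂ : j ≤ k₃) :
    (∀ i, istar a k₁ j < i → i ≤ k₁ → aver a i j < aver a (i - 1) j) ∧
    (∀ i, 2 ≤ i → i ≤ istar a k₁ j → a (i - 1) ≤ aver a i j) ∧
    (∀ i, 2 ≤ i → i ≤ istar a k₁ j → aver a (i - 1) j ≤ aver a i j) :=
  statement5_general k₁ k₂ a hk₁₂ hmono1 j hj₁
end

section
/- In the continuous balance-point setting, assume in addition that G is continuous on I₁ and on I₃. Fix w ∈ I₃ and suppose v*(w) ∈ (0, b₁). Then, as a function of v ∈ I₁: (1) for all v₁ < v₂ in (v*(w), b₁), T(v₁,w;G) ≥ T(v₂,w;G); (2) T(v*(w), w; G) = G(v*(w)); (3) T(v,w;G) ≥ G(v) for all 0 < v ≤ v*(w); (4) for all v₁ < v₂ in (0, v*(w)), T(v₁,w;G) ≤ T(v₂,w;G). -/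
open MeasureTheory Set Filter Topology

/-- `I_T = I₁ ∪ I₂ ∪ I₃ = (0,b₁) ∪ [b₁,b₂] ∪ (b₂,b₃)`, where `b₃` may be `+∞`. -/
def ITset (b₁ b₂ : ℝ) (b₃ : EReal) : Set ℝ :=
  Ioo 0 b₁ ∪ Icc b₁ b₂ ∪ {y : ℝ | b₂ < y ∧ (y : EReal) < b₃}

/-- The conditioning set `[v,w] ∩ (I_T ∪ {0})` (with possibly infinite right endpoint). -/
def condSet (b₁ b₂ : ℝ) (b₃ : EReal) (v : ℝ) (w : EReal) : Set ℝ :=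
  {y : ℝ | v ≤ y ∧ (y : EReal) ≤ w} ∩ (ITset b₁ b₂ b₃ ∪ {0})

/-- The conditional expectation `T(v,w;G) = E[G(Y) | Y ∈ [v,w] ∩ (I_T ∪ {0})]`,
where `μ` is the law of `Y`. -/
noncomputable def condT (b₁ b₂ : ℝ) (b₃ : EReal) (G : ℝ → ℝ) (μ : Measure ℝ)
    (v : ℝ) (w : EReal) : ℝ :=
  (∫ y in condSet b₁ b₂ b₃ v w, G y ∂μ) / (μ (condSet b₁ b₂ b₃ v w)).toReal

/-- `V_{R,ε}(w) = {v ∈ I₁ : T(v,w;G) < G(v⁻) − ε}`. -/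
noncomputable def VR (b₁ b₂ : ℝ) (b₃ : EReal) (G : ℝ → ℝ) (μ : Measure ℝ)
    (ε : ℝ) (w : EReal) : Set ℝ :=
  {v | v ∈ Ioo 0 b₁ ∧ condT b₁ b₂ b₃ G μ v w < Function.leftLim G v - ε}

open Classical in
/-- `v*_{R,ε}(w)`. -/
noncomputable def vstarR (b₁ b₂ : ℝ) (b₃ : EReal) (G : ℝ → ℝ) (μ : Measure ℝ)
    (ε : ℝ) (w : EReal) : ℝ :=
  if (VR b₁ b₂ b₃ G μ ε w).Nonempty then sInf (VR b₁ b₂ b₃ G μ ε w) else b₁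

/-- The left balance point `v*(w) = v*_{R,0}(w)`. -/
noncomputable def vstar (b₁ b₂ : ℝ) (b₃ : EReal) (G : ℝ → ℝ) (μ : Measure ℝ)
    (w : EReal) : ℝ :=
  vstarR b₁ b₂ b₃ G μ 0 w

/-- `W_{L,ε} = {w ∈ I₃ : T(v*(w),w;G) > G(w⁺) + ε}`. -/
noncomputable def WL (b₁ b₂ : ℝ) (b₃ : EReal) (G : ℝ → ℝ) (μ : Measure ℝ)
    (ε : ℝ) : Set ℝ :=
  {w : ℝ | (b₂ < w ∧ (w : EReal) < b₃) ∧
    Function.rightLim G w + ε < condT b₁ b₂ b₃ G μ (vstar b₁ b₂ b₃ G μ w) w}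

open Classical in
/-- `w*_{L,ε}` (an extended real, since `W_{L,ε}` may be unbounded when `b₃ = ∞`). -/
noncomputable def wstarL (b₁ b₂ : ℝ) (b₃ : EReal) (G : ℝ → ℝ) (μ : Measure ℝ)
    (ε : ℝ) : EReal :=
  if (WL b₁ b₂ b₃ G μ ε).Nonempty
  then sSup ((fun x : ℝ => (x : EReal)) '' WL b₁ b₂ b₃ G μ ε)
  else (b₂ : EReal)

/-- The right balance point `w* = w*_{L,0}`. -/
noncomputable def wstar (b₁ b₂ : ℝ) (b₃ : EReal) (G : ℝ → ℝ) (μ : Measure ℝ) : EReal :=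
  wstarL b₁ b₂ b₃ G μ 0

/-- `v* = v*(w*)`. -/
noncomputable def vstarstar (b₁ b₂ : ℝ) (b₃ : EReal) (G : ℝ → ℝ) (μ : Measure ℝ) : ℝ :=
  vstar b₁ b₂ b₃ G μ (wstar b₁ b₂ b₃ G μ)

/-! On `I₁` the conditional expectation is the tail average `T(v) = ⨍_{[v,w]} G`. For `v₁ < v₂`,
splitting `∫_{[v₁,w]} (G - c)` at `v₂` and using monotonicity of `G` on `[v₁,v₂)` shows that
`T(v₂) ≤ c` implies `T(v₁) ≤ c` when `c ≥ G(v₂)`, and `T(v₁) ≤ c` implies `T(v₂) ≤ c` when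
`c ≤ G(v₁)`. Hence `T ≥ G` below `v*(w) = inf {T < G}`, which makes `T` nondecreasing there, and
`T ≤ G` above `v*(w)`, which makes `T` nonincreasing there. At `v*(w)` itself, continuity of `G`
gives `T ≤ G` from the right, and from the left the same splitting bounds
`μ[v*,w] (G(v*) - T(v*))` by a multiple of `G(v*) - G(v)`. -/

section TailAverage

theorem setIntegral_Icc_eq_Ico_add_Icc {μ : Measure ℝ} {f : ℝ → ℝ} {v₁ v₂ w : ℝ}
    (hf : Integrable f μ) (h₁₂ : v₁ ≤ v₂) (h₂w : v₂ ≤ w) :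
    ∫ y in Icc v₁ w, f y ∂μ = (∫ y in Ico v₁ v₂, f y ∂μ) + ∫ y in Icc v₂ w, f y ∂μ := by
  rw [← Ico_union_Icc_eq_Icc h₁₂ h₂w, setIntegral_union
    (disjoint_left.mpr fun _ h₁ h₂ => (not_le.mpr h₁.2) h₂.1)
    measurableSet_Icc hf.integrableOn hf.integrableOn]

variable {μ : Measure ℝ} [IsFiniteMeasure μ] {G : ℝ → ℝ} {v₁ v₂ w c : ℝ}

theorem setIntegral_sub_const_eq_mul_setAverage (hG : Integrable G μ) (s : Set ℝ) (c : ℝ) :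
    ∫ y in s, (G y - c) ∂μ = μ.real s * ((⨍ y in s, G y ∂μ) - c) := by
  rw [integral_sub hG.integrableOn (integrable_const c), setIntegral_const,
    ← measure_smul_setAverage G (measure_ne_top μ s), smul_eq_mul, smul_eq_mul, mul_sub]

theorem setIntegral_Icc_sub_const_le_of_le (hG : Integrable G μ)
    (hmono : MonotoneOn G (Icc v₁ v₂)) (h₁₂ : v₁ ≤ v₂) (h₂w : v₂ ≤ w) (hc : G v₂ ≤ c) :
    ∫ y in Icc v₁ w, (G y - c) ∂μ ≤ ∫ y in Icc v₂ w, (G y - c) ∂μ := by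
  have hhead : ∫ y in Ico v₁ v₂, (G y - c) ∂μ ≤ 0 :=
    setIntegral_nonpos measurableSet_Ico fun y hy => by
      linarith [hmono ⟨hy.1, hy.2.le⟩ ⟨h₁₂, le_rfl⟩ hy.2.le]
  rw [setIntegral_Icc_eq_Ico_add_Icc (f := fun y => G y - c) (hG.sub (integrable_const c))
    h₁₂ h₂w]
  linarith

theorem setIntegral_Icc_sub_const_le_of_ge (hG : Integrable G μ)
    (hmono : MonotoneOn G (Icc v₁ v₂)) (h₁₂ : v₁ ≤ v₂) (h₂w : v₂ ≤ w) (hc : c ≤ G v₁) :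
    ∫ y in Icc v₂ w, (G y - c) ∂μ ≤ ∫ y in Icc v₁ w, (G y - c) ∂μ := by
  have hhead : 0 ≤ ∫ y in Ico v₁ v₂, (G y - c) ∂μ :=
    setIntegral_nonneg measurableSet_Ico fun y hy => by
      linarith [hmono ⟨le_rfl, h₁₂⟩ ⟨hy.1, hy.2.le⟩ hy.1]
  rw [setIntegral_Icc_eq_Ico_add_Icc (f := fun y => G y - c) (hG.sub (integrable_const c))
    h₁₂ h₂w]
  linarith

theorem setAverage_Icc_le_setAverage_Icc_of_apply_le (hG : Integrable G μ)
    (hmono : MonotoneOn G (Icc v₁ v₂)) (h₁₂ : v₁ ≤ v₂) (h₂w : v₂ ≤ w)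
    (hpos : 0 < μ.real (Icc v₂ w)) (h : G v₂ ≤ ⨍ y in Icc v₂ w, G y ∂μ) :
    ⨍ y in Icc v₁ w, G y ∂μ ≤ ⨍ y in Icc v₂ w, G y ∂μ := by
  have hpos₁ : 0 < μ.real (Icc v₁ w) :=
    hpos.trans_le (measureReal_mono (Icc_subset_Icc_left h₁₂))
  have := setIntegral_Icc_sub_const_le_of_le hG hmono h₁₂ h₂w h
  simp only [setIntegral_sub_const_eq_mul_setAverage hG, sub_self, mul_zero] at this
  exact sub_nonpos.mp (nonpos_of_mul_nonpos_right this hpos₁)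

theorem setAverage_Icc_le_setAverage_Icc_of_le_apply (hG : Integrable G μ)
    (hmono : MonotoneOn G (Icc v₁ v₂)) (h₁₂ : v₁ ≤ v₂) (h₂w : v₂ ≤ w)
    (hpos : 0 < μ.real (Icc v₂ w)) (h : ⨍ y in Icc v₁ w, G y ∂μ ≤ G v₁) :
    ⨍ y in Icc v₂ w, G y ∂μ ≤ ⨍ y in Icc v₁ w, G y ∂μ := by
  have := setIntegral_Icc_sub_const_le_of_ge hG hmono h₁₂ h₂w h
  simp only [setIntegral_sub_const_eq_mul_setAverage hG, sub_self, mul_zero] at this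
  exact sub_nonpos.mp (nonpos_of_mul_nonpos_right this hpos)

theorem measureReal_mul_setAverage_Icc_sub_le (hG : Integrable G μ)
    (hmono : MonotoneOn G (Icc v₁ v₂)) (h₁₂ : v₁ ≤ v₂) (h₂w : v₂ ≤ w) :
    μ.real (Icc v₁ w) * ((⨍ y in Icc v₁ w, G y ∂μ) - G v₂) ≤
      μ.real (Icc v₂ w) * ((⨍ y in Icc v₂ w, G y ∂μ) - G v₂) := by
  simpa only [setIntegral_sub_const_eq_mul_setAverage hG] using
    setIntegral_Icc_sub_const_le_of_le hG hmono h₁₂ h₂w le_rfl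

theorem setAverage_Icc_lt_apply_of_lt (hG : Integrable G μ) (hmono : MonotoneOn G (Icc v₁ v₂))
    (h₁₂ : v₁ ≤ v₂) (h₂w : v₂ ≤ w) (hpos : 0 < μ.real (Icc v₂ w))
    (h : ⨍ y in Icc v₂ w, G y ∂μ < G v₂) :
    ⨍ y in Icc v₁ w, G y ∂μ < G v₂ := by
  have htail : μ.real (Icc v₂ w) * ((⨍ y in Icc v₂ w, G y ∂μ) - G v₂) < 0 :=
    mul_neg_of_pos_of_neg hpos (sub_neg.mpr h)
  by_contra! hge
  linarith [measureReal_mul_setAverage_Icc_sub_le hG hmono h₁₂ h₂w,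
    mul_nonneg (measureReal_nonneg (μ := μ) (s := Icc v₁ w)) (sub_nonneg.mpr hge)]

end TailAverage

section BalancePoint

variable {μ : Measure ℝ} {G : ℝ → ℝ} {a c w s v : ℝ}

theorem le_setAverage_Icc_of_lt_isGLB
    (hs : IsGLB {v ∈ Ioo a c | ⨍ y in Icc v w, G y ∂μ < G v} s)
    (hv : v ∈ Ioo a c) (hvs : v < s) :
    G v ≤ ⨍ y in Icc v w, G y ∂μ := by
  by_contra! h
  exact hvs.not_ge (hs.1 ⟨hv, h⟩)

theorem setAverage_Icc_le_of_isGLB_lt [IsFiniteMeasure μ] (hG : Integrable G μ)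
    (hmono : MonotoneOn G (Ioo a c)) (hcw : c ≤ w)
    (hpos : ∀ v ∈ Ioo a c, 0 < μ.real (Icc v w))
    (hs : IsGLB {v ∈ Ioo a c | ⨍ y in Icc v w, G y ∂μ < G v} s)
    (hsv : s < v) (hvc : v < c) :
    ⨍ y in Icc v w, G y ∂μ ≤ G v := by
  obtain ⟨u, ⟨hu, hTu⟩, -, huv⟩ := hs.exists_between hsv
  calc ⨍ y in Icc v w, G y ∂μ ≤ ⨍ y in Icc u w, G y ∂μ :=
        setAverage_Icc_le_setAverage_Icc_of_le_apply hG (hmono.mono (Icc_subset_Ioo hu.1 hvc))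
          huv.le (hvc.le.trans hcw) (hpos v ⟨hu.1.trans huv, hvc⟩) hTu.le
    _ ≤ G u := hTu.le
    _ ≤ G v := hmono hu ⟨hu.1.trans huv, hvc⟩ huv.le

theorem setAverage_Icc_eq_of_isGLB [IsFiniteMeasure μ] (hG : Integrable G μ)
    (hmono : MonotoneOn G (Ioo a c)) (hcw : c ≤ w)
    (hpos : ∀ v ∈ Ioo a c, 0 < μ.real (Icc v w))
    (hs : IsGLB {v ∈ Ioo a c | ⨍ y in Icc v w, G y ∂μ < G v} s)
    (hsI : s ∈ Ioo a c) (hcont : ContinuousAt G s) :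
    ⨍ y in Icc s w, G y ∂μ = G s := by
  set T : ℝ → ℝ := fun v => ⨍ y in Icc v w, G y ∂μ
  apply le_antisymm
  · obtain ⟨u, hu, -⟩ := hs.exists_between (lt_add_one s)
    have hbelow : ∀ u ∈ {v ∈ Ioo a c | T v < G v}, T s ≤ G u := by
      rintro u ⟨huI, hTu⟩
      rcases (hs.1 ⟨huI, hTu⟩).eq_or_lt with rfl | hsu
      · exact hTu.le
      · exact (setAverage_Icc_lt_apply_of_lt hG (hmono.mono (Icc_subset_Ioo hsI.1 huI.2))
          hsu.le (huI.2.le.trans hcw) (hpos u huI) hTu).le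
    exact ContinuousWithinAt.closure_le (hs.mem_closure ⟨u, hu⟩) continuousWithinAt_const
      hcont.continuousWithinAt hbelow
  · have hbound : ∀ v ∈ Ioo a s,
        μ.real univ * (G v - G s) ≤ μ.real (Icc s w) * (T s - G s) := by
      intro v hv
      have hvI : v ∈ Ioo a c := ⟨hv.1, hv.2.trans hsI.2⟩
      calc μ.real univ * (G v - G s) ≤ μ.real (Icc v w) * (G v - G s) :=
            mul_le_mul_of_nonpos_right (measureReal_mono (subset_univ _))
              (sub_nonpos.mpr (hmono hvI hsI hv.2.le))
        _ ≤ μ.real (Icc v w) * (T v - G s) :=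
            mul_le_mul_of_nonneg_left
              (sub_le_sub_right (le_setAverage_Icc_of_lt_isGLB hs hvI hv.2) _) measureReal_nonneg
        _ ≤ μ.real (Icc s w) * (T s - G s) :=
            measureReal_mul_setAverage_Icc_sub_le hG (hmono.mono (Icc_subset_Ioo hv.1 hsI.2))
              hv.2.le (hsI.2.le.trans hcw)
    have hlim : μ.real univ * (G s - G s) ≤ μ.real (Icc s w) * (T s - G s) :=
      ContinuousWithinAt.closure_le
        (by rw [closure_Ioo hsI.1.ne]; exact right_mem_Icc.mpr hsI.1.le)
        (continuousWithinAt_const.mul (hcont.continuousWithinAt.sub continuousWithinAt_const))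
        continuousWithinAt_const hbound
    rw [sub_self, mul_zero] at hlim
    exact sub_nonneg.mp (nonneg_of_mul_nonneg_right hlim (hpos s hsI))

end BalancePoint

section BalancePointSetting

variable {b₁ b₂ : ℝ} {b₃ : EReal} {G : ℝ → ℝ} {μ : Measure ℝ} {v w : ℝ}

theorem condSet_eq_Icc (hv : 0 ≤ v) (hw : b₂ < w ∧ (w : EReal) < b₃) :
    condSet b₁ b₂ b₃ v w = Icc v w := by
  ext y
  constructor
  · rintro ⟨⟨hvy, hyw⟩, -⟩
    exact ⟨hvy, EReal.coe_le_coe_iff.mp hyw⟩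
  · rintro ⟨hvy, hyw⟩
    refine ⟨⟨hvy, EReal.coe_le_coe_iff.mpr hyw⟩, ?_⟩
    rcases (hv.trans hvy).eq_or_lt with rfl | hy
    · exact Or.inr rfl
    · refine Or.inl ?_
      rcases lt_or_ge y b₁ with hyb₁ | hyb₁
      · exact Or.inl (Or.inl ⟨hy, hyb₁⟩)
      rcases le_or_gt y b₂ with hyb₂ | hyb₂
      · exact Or.inl (Or.inr ⟨hyb₁, hyb₂⟩)
      · exact Or.inr ⟨hyb₂, (EReal.coe_le_coe_iff.mpr hyw).trans_lt hw.2⟩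

theorem condT_eq_setAverage (hv : 0 ≤ v) (hw : b₂ < w ∧ (w : EReal) < b₃) :
    condT b₁ b₂ b₃ G μ v w = ⨍ y in Icc v w, G y ∂μ := by
  rw [condT, condSet_eq_Icc hv hw, setAverage_eq, smul_eq_mul, div_eq_inv_mul]
  rfl

theorem VR_zero_eq (hGc : ContinuousOn G (Ioo 0 b₁)) (hw : b₂ < w ∧ (w : EReal) < b₃) :
    VR b₁ b₂ b₃ G μ 0 w = {v ∈ Ioo 0 b₁ | ⨍ y in Icc v w, G y ∂μ < G v} := by
  ext v
  refine and_congr_right fun hv => ?_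
  have hcont : ContinuousAt G v := hGc.continuousAt (Ioo_mem_nhds hv.1 hv.2)
  rw [condT_eq_setAverage hv.1.le hw, sub_zero,
    leftLim_eq_of_tendsto (hcont.tendsto.mono_left nhdsWithin_le_nhds)]

theorem isGLB_vstar (hv : vstar b₁ b₂ b₃ G μ w ∈ Ioo 0 b₁) :
    IsGLB (VR b₁ b₂ b₃ G μ 0 w) (vstar b₁ b₂ b₃ G μ w) := by
  unfold vstar vstarR at *
  split_ifs at hv ⊢ with hne
  · exact isGLB_csInf hne ⟨0, fun u hu => hu.1.1.le⟩
  · exact absurd hv.2 (lt_irrefl b₁)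

theorem measureReal_Icc_pos [IsFiniteMeasure μ]
    (hfull : ∀ a b : ℝ, a < b → Ioo a b ⊆ ITset b₁ b₂ b₃ → 0 < μ (Ioo a b))
    (hbw : b₁ ≤ w) (hv : v ∈ Ioo 0 b₁) :
    0 < μ.real (Icc v w) := by
  have hIoo : 0 < μ (Ioo v b₁) :=
    hfull v b₁ hv.2 fun y hy => Or.inl (Or.inl ⟨hv.1.trans hy.1, hy.2⟩)
  exact ENNReal.toReal_pos
    (hIoo.trans_le (measure_mono (Ioo_subset_Icc_self.trans (Icc_subset_Icc_right hbw)))).ne'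
    (measure_ne_top μ _)

end BalancePointSetting

theorem statement9_general
    (b₁ b₂ : ℝ) (b₃ : EReal) (G : ℝ → ℝ) (μ : Measure ℝ)
    (hb₁₂ : b₁ < b₂)
    (hμ : IsProbabilityMeasure μ)
    (hGint : Integrable G μ)
    (hfull : ∀ a b : ℝ, a < b → Ioo a b ⊆ ITset b₁ b₂ b₃ → 0 < μ (Ioo a b))
    (hG1 : MonotoneOn G (Ioo 0 b₁))
    (hGc1 : ContinuousOn G (Ioo 0 b₁))
    (w : ℝ) (hw : b₂ < w ∧ (w : EReal) < b₃)
    (hv : vstar b₁ b₂ b₃ G μ (w : EReal) ∈ Ioo 0 b₁) :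
    (∀ v₁ v₂ : ℝ, vstar b₁ b₂ b₃ G μ (w : EReal) < v₁ → v₁ < v₂ → v₂ < b₁ →
      condT b₁ b₂ b₃ G μ v₂ (w : EReal) ≤ condT b₁ b₂ b₃ G μ v₁ (w : EReal)) ∧
    (condT b₁ b₂ b₃ G μ (vstar b₁ b₂ b₃ G μ (w : EReal)) (w : EReal)
      = G (vstar b₁ b₂ b₃ G μ (w : EReal))) ∧
    (∀ v : ℝ, 0 < v → v ≤ vstar b₁ b₂ b₃ G μ (w : EReal) →
      G v ≤ condT b₁ b₂ b₃ G μ v (w : EReal)) ∧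
    (∀ v₁ v₂ : ℝ, 0 < v₁ → v₁ < v₂ → v₂ < vstar b₁ b₂ b₃ G μ (w : EReal) →
      condT b₁ b₂ b₃ G μ v₁ (w : EReal) ≤ condT b₁ b₂ b₃ G μ v₂ (w : EReal)) := by
  set s := vstar b₁ b₂ b₃ G μ (w : EReal)
  have hbw : b₁ ≤ w := (hb₁₂.trans hw.1).le
  have hT : ∀ v, 0 < v → condT b₁ b₂ b₃ G μ v w = ⨍ y in Icc v w, G y ∂μ :=
    fun v hv => condT_eq_setAverage hv.le hw
  have hpos : ∀ v ∈ Ioo 0 b₁, 0 < μ.real (Icc v w) := fun v => measureReal_Icc_pos hfull hbw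
  have hglb : IsGLB {v ∈ Ioo 0 b₁ | ⨍ y in Icc v w, G y ∂μ < G v} s := by
    rw [← VR_zero_eq hGc1 hw]
    exact isGLB_vstar hv
  have hbalance : ⨍ y in Icc s w, G y ∂μ = G s :=
    setAverage_Icc_eq_of_isGLB hGint hG1 hbw hpos hglb hv
      (hGc1.continuousAt (Ioo_mem_nhds hv.1 hv.2))
  refine ⟨fun v₁ v₂ h₁ h₁₂ h₂ => ?_, by rw [hT s hv.1, hbalance], fun v h₀ hvs => ?_,
    fun v₁ v₂ h₀ h₁₂ h₂ => ?_⟩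
  · have hv₂ : v₂ ∈ Ioo 0 b₁ := ⟨hv.1.trans (h₁.trans h₁₂), h₂⟩
    rw [hT v₁ (hv.1.trans h₁), hT v₂ hv₂.1]
    exact setAverage_Icc_le_setAverage_Icc_of_le_apply hGint
      (hG1.mono (Icc_subset_Ioo (hv.1.trans h₁) h₂)) h₁₂.le (h₂.le.trans hbw) (hpos v₂ hv₂)
      (setAverage_Icc_le_of_isGLB_lt hGint hG1 hbw hpos hglb h₁ (h₁₂.trans h₂))
  · rw [hT v h₀]
    rcases hvs.eq_or_lt with rfl | hlt
    · exact hbalance.ge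
    · exact le_setAverage_Icc_of_lt_isGLB hglb ⟨h₀, hlt.trans hv.2⟩ hlt
  · have hv₂ : v₂ ∈ Ioo 0 b₁ := ⟨h₀.trans h₁₂, h₂.trans hv.2⟩
    rw [hT v₁ h₀, hT v₂ hv₂.1]
    exact setAverage_Icc_le_setAverage_Icc_of_apply_le hGint
      (hG1.mono (Icc_subset_Ioo h₀ hv₂.2)) h₁₂.le (hv₂.2.le.trans hbw) (hpos v₂ hv₂)
      (le_setAverage_Icc_of_lt_isGLB hglb hv₂ h₂)

theorem statement9
    (b₁ b₂ : ℝ) (b₃ : EReal) (G : ℝ → ℝ) (μ : Measure ℝ)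
    (hb₁ : 0 ≤ b₁) (hb₁₂ : b₁ < b₂) (hb₂₃ : (b₂ : EReal) < b₃)
    (hμ : IsProbabilityMeasure μ) (hμneg : μ (Iio 0) = 0)
    (hGint : Integrable G μ)
    (hfull : ∀ a b : ℝ, a < b → Ioo a b ⊆ ITset b₁ b₂ b₃ → 0 < μ (Ioo a b))
    (hG1 : MonotoneOn G (Ioo 0 b₁))
    (hG2 : StrictAntiOn G (Icc b₁ b₂))
    (hG3 : MonotoneOn G {y : ℝ | b₂ < y ∧ (y : EReal) < b₃})
    (hGc1 : ContinuousOn G (Ioo 0 b₁))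
    (hGc3 : ContinuousOn G {y : ℝ | b₂ < y ∧ (y : EReal) < b₃})
    (w : ℝ) (hw : b₂ < w ∧ (w : EReal) < b₃)
    (hv : vstar b₁ b₂ b₃ G μ (w : EReal) ∈ Ioo 0 b₁) :
    (∀ v₁ v₂ : ℝ, vstar b₁ b₂ b₃ G μ (w : EReal) < v₁ → v₁ < v₂ → v₂ < b₁ →
      condT b₁ b₂ b₃ G μ v₂ (w : EReal) ≤ condT b₁ b₂ b₃ G μ v₁ (w : EReal)) ∧
    (condT b₁ b₂ b₃ G μ (vstar b₁ b₂ b₃ G μ (w : EReal)) (w : EReal)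
      = G (vstar b₁ b₂ b₃ G μ (w : EReal))) ∧
    (∀ v : ℝ, 0 < v → v ≤ vstar b₁ b₂ b₃ G μ (w : EReal) →
      G v ≤ condT b₁ b₂ b₃ G μ v (w : EReal)) ∧
    (∀ v₁ v₂ : ℝ, 0 < v₁ → v₁ < v₂ → v₂ < vstar b₁ b₂ b₃ G μ (w : EReal) →
      condT b₁ b₂ b₃ G μ v₁ (w : EReal) ≤ condT b₁ b₂ b₃ G μ v₂ (w : EReal)) :=
  statement9_general b₁ b₂ b₃ G μ hb₁₂ hμ hGint hfull hG1 hGc1 w hw hv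
end
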